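/- In the distance-fraud model, for all 1 ≤ i ≤ n: Pr(D_i) = (1/4)·Pr(D_{i−1}) + (1/2)·Pr(D_{i−1} ∩ F_{i−1}), with Pr(D_0 ∩ F_0) = 1. Equivalently, Pr(D_i | D_{i−1}, F_{i−1}) = 3/4 and Pr(D_i | D_{i−1}, ¬F_{i−1}) = 1/4 whenever these conditional probabilities are defined. -/
import Mathlib


/-!  The distance-fraud model of the paper.  Bits are elements of `ZMod 2`
(XOR is `+`, AND is `*`).  A sample point consists of the uniformly
distributed, mutually independent `n`-bit strings `Q, R⁰, R¹, c, c̃`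
(key register, answer registers, verifier's challenges, malicious prover's
random challenge guesses). -/

/-- Sample space: `(Q, R⁰, R¹, c, c̃)`. -/
abbrev DistΩ (n : ℕ) :=
  (Fin n → ZMod 2) × (Fin n → ZMod 2) × (Fin n → ZMod 2) ×
  (Fin n → ZMod 2) × (Fin n → ZMod 2)

namespace Dist

variable {n : ℕ}

def keyQ (ω : DistΩ n) : Fin n → ZMod 2 := ω.1
def reg0 (ω : DistΩ n) : Fin n → ZMod 2 := ω.2.1
def reg1 (ω : DistΩ n) : Fin n → ZMod 2 := ω.2.2.1
/-- `c`, the verifier's challenges. -/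
def cVer (ω : DistΩ n) : Fin n → ZMod 2 := ω.2.2.2.1
/-- `c̃`, the malicious prover's random challenge guesses. -/
def cGuess (ω : DistΩ n) : Fin n → ZMod 2 := ω.2.2.2.2

/-- `f_Q` applied to the length-`i` prefix of the challenge string `c`. -/
def fQ (Q c : Fin n → ZMod 2) (i : ℕ) : ZMod 2 :=
  ∑ j : Fin n, if (j : ℕ) < i then c j * Q j else 0

/-- `R_j^{b}`: the register bit selected by the bit `b` at round `j+1`. -/
def reg (ω : DistΩ n) (b : ZMod 2) (j : Fin n) : ZMod 2 :=
  if b = 0 then reg0 ω j else reg1 ω j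

/-- The malicious prover's early reply at round `j+1`:
`a = R_j^{c̃_j} ⊕ f_Q(C̃_j)`. -/
def ans (ω : DistΩ n) (j : Fin n) : ZMod 2 :=
  reg ω (cGuess ω j) j + fQ (keyQ ω) (cGuess ω) ((j : ℕ) + 1)

/-- The correct answer expected by the verifier at round `j+1`. -/
def corr (ω : DistΩ n) (j : Fin n) : ZMod 2 :=
  reg ω (cVer ω j) j + fQ (keyQ ω) (cVer ω) ((j : ℕ) + 1)

/-- `D_i`: the malicious prover wins the first `i` rounds (`D_0` is the sure
event). -/
def D (i : ℕ) (ω : DistΩ n) : Prop :=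
  ∀ j : Fin n, (j : ℕ) < i → ans ω j = corr ω j

/-- `F_i`: the running guess of `f_Q(C_i)` is correct (`F_0` is the sure
event). -/
def F (i : ℕ) (ω : DistΩ n) : Prop :=
  fQ (keyQ ω) (cGuess ω) i = fQ (keyQ ω) (cVer ω) i

open Classical in
/-- Probability of an event under the uniform distribution on `DistΩ n`. -/
noncomputable def pr (n : ℕ) (E : DistΩ n → Prop) : ℚ :=
  ((Finset.univ.filter E).card : ℚ) / ((Finset.univ : Finset (DistΩ n)).card : ℚ)

/-- Conditional probability `Pr(A | B)`. -/
noncomputable def cpr (n : ℕ) (A B : DistΩ n → Prop) : ℚ :=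
  pr n (fun ω => A ω ∧ B ω) / pr n B

end Dist
----------------------------------------------------------------
-- auxiliary development
----------------------------------------------------------------

namespace Dist

open Finset

variable {n : ℕ}

lemma fQ_zero (Q c : Fin n → ZMod 2) : fQ Q c 0 = 0 := by
  simp [fQ]

lemma fQ_congr {Q Q' c c' : Fin n → ZMod 2} {m : ℕ}
    (hQ : ∀ j : Fin n, (j : ℕ) < m → Q j = Q' j)
    (hc : ∀ j : Fin n, (j : ℕ) < m → c j = c' j) :
    fQ Q c m = fQ Q' c' m := by
  unfold fQ
  refine Finset.sum_congr rfl fun j _ => ?_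
  by_cases h : (j : ℕ) < m
  · simp [h, hQ j h, hc j h]
  · simp [h]

lemma fQ_succ (Q c : Fin n → ZMod 2) (k : Fin n) :
    fQ Q c ((k : ℕ) + 1) = fQ Q c (k : ℕ) + c k * Q k := by
  have key : ∀ j : Fin n,
      (if (j : ℕ) < (k : ℕ) + 1 then c j * Q j else 0)
        = (if (j : ℕ) < (k : ℕ) then c j * Q j else 0)
          + (if j = k then c j * Q j else 0) := by
    intro j
    rcases lt_trichotomy (j : ℕ) (k : ℕ) with h | h | h
    · have hjk : j ≠ k := fun e => by simp [e] at h
      simp [h, Nat.lt_succ_of_lt h, hjk]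
    · have hjk : j = k := Fin.ext h
      simp [hjk]
    · have h1 : ¬ (j : ℕ) < (k : ℕ) + 1 := by omega
      have h2 : ¬ (j : ℕ) < (k : ℕ) := by omega
      have hjk : j ≠ k := fun e => by simp [e] at h
      simp [h1, h2, hjk]
  simp only [fQ, key, Finset.sum_add_distrib]
  congr 1
  simp [Finset.sum_ite_eq' Finset.univ k]

/-- Agreement of all five strings below `m`. -/
def AgreeBelow (m : ℕ) (ω ω' : DistΩ n) : Prop :=
  ∀ j : Fin n, (j : ℕ) < m →
    keyQ ω j = keyQ ω' j ∧ reg0 ω j = reg0 ω' j ∧ reg1 ω j = reg1 ω' j ∧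
    cVer ω j = cVer ω' j ∧ cGuess ω j = cGuess ω' j

lemma fQG_congr {ω ω' : DistΩ n} {m : ℕ} (h : AgreeBelow m ω ω') :
    fQ (keyQ ω) (cGuess ω) m = fQ (keyQ ω') (cGuess ω') m :=
  fQ_congr (fun j hj => (h j hj).1) (fun j hj => (h j hj).2.2.2.2)

lemma fQV_congr {ω ω' : DistΩ n} {m : ℕ} (h : AgreeBelow m ω ω') :
    fQ (keyQ ω) (cVer ω) m = fQ (keyQ ω') (cVer ω') m :=
  fQ_congr (fun j hj => (h j hj).1) (fun j hj => (h j hj).2.2.2.1)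

lemma F_congr {ω ω' : DistΩ n} {m : ℕ} (h : AgreeBelow m ω ω') :
    F m ω ↔ F m ω' := by
  unfold F
  rw [fQG_congr h, fQV_congr h]

lemma ans_congr {ω ω' : DistΩ n} {m : ℕ} (h : AgreeBelow m ω ω')
    {j : Fin n} (hj : (j : ℕ) < m) : ans ω j = ans ω' j := by
  have hsub : AgreeBelow ((j : ℕ) + 1) ω ω' := fun j' hj' => h j' (by omega)
  obtain ⟨h1, h2, h3, h4, h5⟩ := h j hj
  unfold ans reg
  rw [fQG_congr hsub, h5, h2, h3]

lemma corr_congr {ω ω' : DistΩ n} {m : ℕ} (h : AgreeBelow m ω ω')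
    {j : Fin n} (hj : (j : ℕ) < m) : corr ω j = corr ω' j := by
  have hsub : AgreeBelow ((j : ℕ) + 1) ω ω' := fun j' hj' => h j' (by omega)
  obtain ⟨h1, h2, h3, h4, h5⟩ := h j hj
  unfold corr reg
  rw [fQV_congr hsub, h4, h2, h3]

lemma D_congr {ω ω' : DistΩ n} {m : ℕ} (h : AgreeBelow m ω ω') :
    D m ω ↔ D m ω' := by
  unfold D
  constructor <;> intro hD j hj
  · rw [← ans_congr h hj, ← corr_congr h hj]; exact hD j hj
  · rw [ans_congr h hj, corr_congr h hj]; exact hD j hj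

lemma D_succ {m : ℕ} (hm : m < n) (ω : DistΩ n) :
    D (m + 1) ω ↔ D m ω ∧ ans ω ⟨m, hm⟩ = corr ω ⟨m, hm⟩ := by
  constructor
  · intro h
    exact ⟨fun j hj => h j (by omega), h ⟨m, hm⟩ (by simp)⟩
  · rintro ⟨h1, h2⟩ j hj
    rcases Nat.lt_or_ge (j : ℕ) m with h | h
    · exact h1 j h
    · have hj : j = ⟨m, hm⟩ := Fin.ext (by simpa using by omega)
      rw [hj]; exact h2

end Dist

namespace Dist

open Finset

variable {n : ℕ}

abbrev Bits := ZMod 2 × ZMod 2 × ZMod 2 × ZMod 2 × ZMod 2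

abbrev Rest (n : ℕ) (k : Fin n) :=
  ({j : Fin n // j ≠ k} → ZMod 2) × ({j : Fin n // j ≠ k} → ZMod 2) ×
  ({j : Fin n // j ≠ k} → ZMod 2) × ({j : Fin n // j ≠ k} → ZMod 2) ×
  ({j : Fin n // j ≠ k} → ZMod 2)

def patch (k : Fin n) (b : ZMod 2) (f : {j : Fin n // j ≠ k} → ZMod 2) :
    Fin n → ZMod 2 :=
  fun j => if h : j = k then b else f ⟨j, h⟩

def splitE (k : Fin n) : DistΩ n ≃ Bits × Rest n k where
  toFun ω := ((ω.1 k, ω.2.1 k, ω.2.2.1 k, ω.2.2.2.1 k, ω.2.2.2.2 k),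
    (fun j => ω.1 j.1, fun j => ω.2.1 j.1, fun j => ω.2.2.1 j.1,
     fun j => ω.2.2.2.1 j.1, fun j => ω.2.2.2.2 j.1))
  invFun x := (patch k x.1.1 x.2.1, patch k x.1.2.1 x.2.2.1,
    patch k x.1.2.2.1 x.2.2.2.1, patch k x.1.2.2.2.1 x.2.2.2.2.1,
    patch k x.1.2.2.2.2 x.2.2.2.2.2)
  left_inv ω := by
    obtain ⟨a, b, c, d, e⟩ := ω
    simp only [Prod.mk.injEq]
    refine ⟨?_, ?_, ?_, ?_, ?_⟩ <;>
      · funext j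
        by_cases h : j = k
        · subst h; simp [patch]
        · simp [patch, h]
  right_inv x := by
    obtain ⟨⟨q, r0, r1, cv, cg⟩, f1, f2, f3, f4, f5⟩ := x
    simp only [Prod.mk.injEq]
    refine ⟨⟨?_, ?_, ?_, ?_, ?_⟩, ?_, ?_, ?_, ?_, ?_⟩ <;>
      first
        | (funext j; simp [patch, j.2])
        | simp [patch]

lemma agree_symm (k : Fin n) (b b' : Bits) (r : Rest n k) {m : ℕ}
    (hm : m ≤ (k : ℕ)) :
    AgreeBelow m ((splitE k).symm (b, r)) ((splitE k).symm (b', r)) := by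
  intro j hj
  have hjk : j ≠ k := by
    intro h; subst h; omega
  simp [splitE, patch, keyQ, reg0, reg1, cVer, cGuess, hjk]

lemma eval_at_k (k : Fin n) (b : Bits) (r : Rest n k) :
    keyQ ((splitE k).symm (b, r)) k = b.1 ∧
    reg0 ((splitE k).symm (b, r)) k = b.2.1 ∧
    reg1 ((splitE k).symm (b, r)) k = b.2.2.1 ∧
    cVer ((splitE k).symm (b, r)) k = b.2.2.2.1 ∧
    cGuess ((splitE k).symm (b, r)) k = b.2.2.2.2 := by
  simp [splitE, patch, keyQ, reg0, reg1, cVer, cGuess]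

/-- Per-round win predicates on the five fresh bits, with offset `d`. -/
def W (d : ZMod 2) (b : Bits) : Prop :=
  (if b.2.2.2.2 = 0 then b.2.1 else b.2.2.1) + b.2.2.2.2 * b.1 + d
    = (if b.2.2.2.1 = 0 then b.2.1 else b.2.2.1) + b.2.2.2.1 * b.1

instance (d : ZMod 2) : DecidablePred (W d) := fun b => by
  unfold W; infer_instance

lemma count_W0 : (Finset.univ.filter (W (0 : ZMod 2))).card = 24 := by decide
lemma count_W1 : (Finset.univ.filter (W (1 : ZMod 2))).card = 8 := by decide

lemma win_iff (k : Fin n) (b : Bits) (r : Rest n k) :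
    (ans ((splitE k).symm (b, r)) k = corr ((splitE k).symm (b, r)) k) ↔
      W (fQ (keyQ ((splitE k).symm (b, r))) (cGuess ((splitE k).symm (b, r))) (k : ℕ)
        + fQ (keyQ ((splitE k).symm (b, r))) (cVer ((splitE k).symm (b, r))) (k : ℕ)) b := by
  obtain ⟨h1, h2, h3, h4, h5⟩ := eval_at_k k b r
  set ω := (splitE k).symm (b, r)
  unfold ans corr reg W
  rw [fQ_succ, fQ_succ, h1, h2, h3, h4, h5]
  have key : ∀ A C x y g h : ZMod 2,
      A + (g + x) = C + (h + y) ↔ A + x + (g + h) = C + y := by decide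
  exact key _ _ _ _ _ _

end Dist

namespace Dist

open Finset

variable {n : ℕ}

lemma card_filter_iff {α : Type*} [Fintype α] {p q : α → Prop}
    [DecidablePred p] [DecidablePred q] (h : ∀ a, p a ↔ q a) :
    (univ.filter p).card = (univ.filter q).card := by
  congr 1
  ext a
  simp [h a]

lemma card_bits : (univ : Finset Bits).card = 32 := by
  simp [card_univ]

open Classical in
lemma count_F {m : ℕ} (hm : m < n) :
    4 * (univ.filter (fun ω : DistΩ n =>
        D m ω ∧ F m ω ∧ ans ω ⟨m, hm⟩ = corr ω ⟨m, hm⟩)).card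
      = 3 * (univ.filter (fun ω : DistΩ n => D m ω ∧ F m ω)).card := by
  classical
  set k : Fin n := ⟨m, hm⟩ with hk
  set b₀ : Bits := (0, 0, 0, 0, 0) with hb₀
  set P : Rest n k → Prop :=
    fun r => D m ((splitE k).symm (b₀, r)) ∧ F m ((splitE k).symm (b₀, r)) with hP
  have hmk : m ≤ (k : ℕ) := le_refl m
  -- main pointwise iff
  have main : ∀ x : Bits × Rest n k,
      (D m ((splitE k).symm x) ∧ F m ((splitE k).symm x) ∧
        ans ((splitE k).symm x) k = corr ((splitE k).symm x) k)
      ↔ (W 0 x.1 ∧ P x.2) := by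
    rintro ⟨b, r⟩
    have hag := agree_symm k b b₀ r hmk
    have hD := D_congr hag
    have hF := F_congr hag
    have hwin := win_iff k b r
    constructor
    · rintro ⟨h1, h2, h3⟩
      have hoff : fQ (keyQ ((splitE k).symm (b, r))) (cGuess ((splitE k).symm (b, r))) (k : ℕ)
          + fQ (keyQ ((splitE k).symm (b, r))) (cVer ((splitE k).symm (b, r))) (k : ℕ) = 0 := by
        have h2' := h2
        unfold F at h2'
        rw [h2']
        exact CharTwo.add_self_eq_zero _
      rw [hwin, hoff] at h3
      exact ⟨h3, hD.1 h1, hF.1 h2⟩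
    · rintro ⟨h3, h1, h2⟩
      have h1' := hD.2 h1
      have h2' := hF.2 h2
      refine ⟨h1', h2', ?_⟩
      have hoff : fQ (keyQ ((splitE k).symm (b, r))) (cGuess ((splitE k).symm (b, r))) (k : ℕ)
          + fQ (keyQ ((splitE k).symm (b, r))) (cVer ((splitE k).symm (b, r))) (k : ℕ) = 0 := by
        have h2'' := h2'
        unfold F at h2''
        rw [h2'']
        exact CharTwo.add_self_eq_zero _
      rw [hwin, hoff]
      exact h3
  have side : ∀ x : Bits × Rest n k,
      (D m ((splitE k).symm x) ∧ F m ((splitE k).symm x)) ↔ P x.2 := by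
    rintro ⟨b, r⟩
    have hag := agree_symm k b b₀ r hmk
    exact and_congr (D_congr hag) (F_congr hag)
  -- transfer cards through the equivalence
  have e1 : (univ.filter (fun ω : DistΩ n =>
        D m ω ∧ F m ω ∧ ans ω k = corr ω k)).card
      = (univ.filter (fun x : Bits × Rest n k => W 0 x.1 ∧ P x.2)).card := by
    apply Finset.card_equiv (splitE k)
    intro ω
    simp only [mem_filter, mem_univ, true_and]
    have := main (splitE k ω)
    rwa [Equiv.symm_apply_apply] at this
  have e2 : (univ.filter (fun ω : DistΩ n => D m ω ∧ F m ω)).card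
      = (univ.filter (fun x : Bits × Rest n k => P x.2)).card := by
    apply Finset.card_equiv (splitE k)
    intro ω
    simp only [mem_filter, mem_univ, true_and]
    have := side (splitE k ω)
    rwa [Equiv.symm_apply_apply] at this
  have p1 : (univ.filter (fun x : Bits × Rest n k => W 0 x.1 ∧ P x.2)).card
      = 24 * (univ.filter P).card := by
    rw [← Finset.univ_product_univ, Finset.filter_product, Finset.card_product]
    rw [count_W0]
  have p2 : (univ.filter (fun x : Bits × Rest n k => P x.2)).card
      = 32 * (univ.filter P).card := by
    have hp : (univ.filter (fun x : Bits × Rest n k => P x.2))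
        = (univ : Finset Bits) ×ˢ (univ.filter P) := by
      rw [← Finset.univ_product_univ]
      exact Finset.filter_product_right P
    rw [hp, Finset.card_product, card_bits]
  rw [e1, e2, p1, p2]
  ring

open Classical in
lemma count_nF {m : ℕ} (hm : m < n) :
    4 * (univ.filter (fun ω : DistΩ n =>
        D m ω ∧ ¬ F m ω ∧ ans ω ⟨m, hm⟩ = corr ω ⟨m, hm⟩)).card
      = (univ.filter (fun ω : DistΩ n => D m ω ∧ ¬ F m ω)).card := by
  classical
  set k : Fin n := ⟨m, hm⟩ with hk
  set b₀ : Bits := (0, 0, 0, 0, 0) with hb₀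
  set P : Rest n k → Prop :=
    fun r => D m ((splitE k).symm (b₀, r)) ∧ ¬ F m ((splitE k).symm (b₀, r)) with hP
  have hmk : m ≤ (k : ℕ) := le_refl m
  have neq_add : ∀ a b : ZMod 2, a ≠ b → a + b = 1 := by decide
  have main : ∀ x : Bits × Rest n k,
      (D m ((splitE k).symm x) ∧ ¬ F m ((splitE k).symm x) ∧
        ans ((splitE k).symm x) k = corr ((splitE k).symm x) k)
      ↔ (W 1 x.1 ∧ P x.2) := by
    rintro ⟨b, r⟩
    have hag := agree_symm k b b₀ r hmk
    have hD := D_congr hag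
    have hF := F_congr hag
    have hwin := win_iff k b r
    constructor
    · rintro ⟨h1, h2, h3⟩
      have hoff : fQ (keyQ ((splitE k).symm (b, r))) (cGuess ((splitE k).symm (b, r))) (k : ℕ)
          + fQ (keyQ ((splitE k).symm (b, r))) (cVer ((splitE k).symm (b, r))) (k : ℕ) = 1 := by
        apply neq_add
        exact h2
      rw [hwin, hoff] at h3
      exact ⟨h3, hD.1 h1, fun hc => h2 (hF.2 hc)⟩
    · rintro ⟨h3, h1, h2⟩
      have h1' := hD.2 h1
      have h2' : ¬ F m ((splitE k).symm (b, r)) := fun hc => h2 (hF.1 hc)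
      refine ⟨h1', h2', ?_⟩
      have hoff : fQ (keyQ ((splitE k).symm (b, r))) (cGuess ((splitE k).symm (b, r))) (k : ℕ)
          + fQ (keyQ ((splitE k).symm (b, r))) (cVer ((splitE k).symm (b, r))) (k : ℕ) = 1 := by
        apply neq_add
        exact h2'
      rw [hwin, hoff]
      exact h3
  have side : ∀ x : Bits × Rest n k,
      (D m ((splitE k).symm x) ∧ ¬ F m ((splitE k).symm x)) ↔ P x.2 := by
    rintro ⟨b, r⟩
    have hag := agree_symm k b b₀ r hmk
    exact and_congr (D_congr hag) (not_congr (F_congr hag))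
  have e1 : (univ.filter (fun ω : DistΩ n =>
        D m ω ∧ ¬ F m ω ∧ ans ω k = corr ω k)).card
      = (univ.filter (fun x : Bits × Rest n k => W 1 x.1 ∧ P x.2)).card := by
    apply Finset.card_equiv (splitE k)
    intro ω
    simp only [mem_filter, mem_univ, true_and]
    have := main (splitE k ω)
    rwa [Equiv.symm_apply_apply] at this
  have e2 : (univ.filter (fun ω : DistΩ n => D m ω ∧ ¬ F m ω)).card
      = (univ.filter (fun x : Bits × Rest n k => P x.2)).card := by
    apply Finset.card_equiv (splitE k)
    intro ω
    simp only [mem_filter, mem_univ, true_and]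
    have := side (splitE k ω)
    rwa [Equiv.symm_apply_apply] at this
  have p1 : (univ.filter (fun x : Bits × Rest n k => W 1 x.1 ∧ P x.2)).card
      = 8 * (univ.filter P).card := by
    rw [← Finset.univ_product_univ, Finset.filter_product, Finset.card_product]
    rw [count_W1]
  have p2 : (univ.filter (fun x : Bits × Rest n k => P x.2)).card
      = 32 * (univ.filter P).card := by
    have hp : (univ.filter (fun x : Bits × Rest n k => P x.2))
        = (univ : Finset Bits) ×ˢ (univ.filter P) := by
      rw [← Finset.univ_product_univ]
      exact Finset.filter_product_right P
    rw [hp, Finset.card_product, card_bits]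
  rw [e1, e2, p1, p2]
  ring

end Dist

namespace Dist

open Finset

variable {n : ℕ}

lemma D_zero (ω : DistΩ n) : D 0 ω := fun _ h => absurd h (Nat.not_lt_zero _)

lemma F_zero (ω : DistΩ n) : F 0 ω := by
  unfold F
  rw [fQ_zero, fQ_zero]

lemma card_filter_irrel {α : Type*} [Fintype α] (p : α → Prop)
    (h1 h2 : DecidablePred p) :
    (@Finset.filter α p h1 Finset.univ).card
      = (@Finset.filter α p h2 Finset.univ).card := by
  have : h1 = h2 := Subsingleton.elim h1 h2
  rw [this]

lemma pr_def (E : DistΩ n → Prop) [DecidablePred E] :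
    pr n E = ((Finset.univ.filter E).card : ℚ)
      / ((Finset.univ : Finset (DistΩ n)).card : ℚ) := by
  unfold pr
  congr 1
  exact_mod_cast card_filter_irrel E _ _

open Classical in
lemma card_D_split {m : ℕ} (hm : m < n) :
    (univ.filter (D (m + 1) : DistΩ n → Prop)).card
      = (univ.filter (fun ω : DistΩ n =>
          D m ω ∧ F m ω ∧ ans ω ⟨m, hm⟩ = corr ω ⟨m, hm⟩)).card
        + (univ.filter (fun ω : DistΩ n =>
          D m ω ∧ ¬ F m ω ∧ ans ω ⟨m, hm⟩ = corr ω ⟨m, hm⟩)).card := by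
  classical
  rw [← Finset.card_filter_add_card_filter_not
    (s := univ.filter (D (m + 1) : DistΩ n → Prop)) (F m)]
  rw [Finset.filter_filter, Finset.filter_filter]
  congr 1
  · apply card_filter_iff
    intro ω
    rw [D_succ hm]
    tauto
  · apply card_filter_iff
    intro ω
    rw [D_succ hm]
    tauto

open Classical in
lemma card_Dm_split (m : ℕ) :
    (univ.filter (D m : DistΩ n → Prop)).card
      = (univ.filter (fun ω : DistΩ n => D m ω ∧ F m ω)).card
        + (univ.filter (fun ω : DistΩ n => D m ω ∧ ¬ F m ω)).card := by
  classical
  rw [← Finset.card_filter_add_card_filter_not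
    (s := univ.filter (D m : DistΩ n → Prop)) (F m)]
  rw [Finset.filter_filter, Finset.filter_filter]

end Dist


open Dist in
/-- `Pr(D_i) = (1/4)·Pr(D_{i−1}) + (1/2)·Pr(D_{i−1} ∩ F_{i−1})`
with `Pr(D_0 ∩ F_0) = 1`; equivalently `Pr(D_i | D_{i−1}, F_{i−1}) = 3/4` and
`Pr(D_i | D_{i−1}, ¬F_{i−1}) = 1/4` whenever these conditional probabilities
are defined. -/
theorem distance_fraud_one_step (n : ℕ) :
    (∀ i, 1 ≤ i → i ≤ n →
      pr n (D i)
        = (1 / 4) * pr n (D (i - 1))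
          + (1 / 2) * pr n (fun ω => D (i - 1) ω ∧ F (i - 1) ω)) ∧
    pr n (fun ω => D 0 ω ∧ F 0 ω) = 1 ∧
    (∀ i, 1 ≤ i → i ≤ n →
      (pr n (fun ω => D (i - 1) ω ∧ F (i - 1) ω) ≠ 0 →
        cpr n (D i) (fun ω => D (i - 1) ω ∧ F (i - 1) ω) = 3 / 4) ∧
      (pr n (fun ω => D (i - 1) ω ∧ ¬ F (i - 1) ω) ≠ 0 →
        cpr n (D i) (fun ω => D (i - 1) ω ∧ ¬ F (i - 1) ω) = 1 / 4)) := by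
  classical
  have hNpos : 0 < ((Finset.univ : Finset (DistΩ n)).card : ℚ) := by
    have : 0 < (Finset.univ : Finset (DistΩ n)).card :=
      Finset.card_pos.2 ⟨(fun _ => 0, fun _ => 0, fun _ => 0, fun _ => 0, fun _ => 0),
        Finset.mem_univ _⟩
    exact_mod_cast this
  refine ⟨?_, ?_, ?_⟩
  · intro i h1 h2
    obtain ⟨m, rfl⟩ : ∃ m, i = m + 1 := ⟨i - 1, by omega⟩
    have hm : m < n := by omega
    simp only [Nat.add_sub_cancel]
    simp only [pr_def]
    rw [card_D_split hm, card_Dm_split m]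
    have c1 := count_F hm
    have c2 := count_nF hm
    have c1' : 4 * ((Finset.univ.filter (fun ω : DistΩ n =>
        D m ω ∧ F m ω ∧ ans ω ⟨m, hm⟩ = corr ω ⟨m, hm⟩)).card : ℚ)
        = 3 * ((Finset.univ.filter (fun ω : DistΩ n => D m ω ∧ F m ω)).card : ℚ) := by
      exact_mod_cast congrArg (Nat.cast : ℕ → ℚ) c1
    have c2' : 4 * ((Finset.univ.filter (fun ω : DistΩ n =>
        D m ω ∧ ¬ F m ω ∧ ans ω ⟨m, hm⟩ = corr ω ⟨m, hm⟩)).card : ℚ)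
        = ((Finset.univ.filter (fun ω : DistΩ n => D m ω ∧ ¬ F m ω)).card : ℚ) := by
      exact_mod_cast congrArg (Nat.cast : ℕ → ℚ) c2
    push_cast
    have hnum : (((Finset.univ.filter (fun ω : DistΩ n =>
          D m ω ∧ F m ω ∧ ans ω ⟨m, hm⟩ = corr ω ⟨m, hm⟩)).card : ℚ)
        + ((Finset.univ.filter (fun ω : DistΩ n =>
          D m ω ∧ ¬ F m ω ∧ ans ω ⟨m, hm⟩ = corr ω ⟨m, hm⟩)).card : ℚ))
        = 1 / 4 * (((Finset.univ.filter (fun ω : DistΩ n => D m ω ∧ F m ω)).card : ℚ)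
            + ((Finset.univ.filter (fun ω : DistΩ n => D m ω ∧ ¬ F m ω)).card : ℚ))
          + 1 / 2 * ((Finset.univ.filter (fun ω : DistΩ n => D m ω ∧ F m ω)).card : ℚ) := by
      linarith
    rw [hnum]
    ring
  · simp only [pr_def]
    rw [Finset.filter_true_of_mem (fun ω _ => ⟨D_zero ω, F_zero ω⟩)]
    exact div_self (ne_of_gt hNpos)
  · intro i h1 h2
    obtain ⟨m, rfl⟩ : ∃ m, i = m + 1 := ⟨i - 1, by omega⟩
    have hm : m < n := by omega
    simp only [Nat.add_sub_cancel]
    constructor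
    · intro hne
      unfold cpr
      simp only [pr_def] at hne ⊢
      have key : (Finset.univ.filter (fun ω : DistΩ n =>
          D (m + 1) ω ∧ (D m ω ∧ F m ω))).card
          = (Finset.univ.filter (fun ω : DistΩ n =>
          D m ω ∧ F m ω ∧ ans ω ⟨m, hm⟩ = corr ω ⟨m, hm⟩)).card := by
        apply card_filter_iff
        intro ω
        rw [D_succ hm]
        tauto
      rw [key, div_div_div_cancel_right₀ (ne_of_gt hNpos)]
      have c1' : 4 * ((Finset.univ.filter (fun ω : DistΩ n =>
          D m ω ∧ F m ω ∧ ans ω ⟨m, hm⟩ = corr ω ⟨m, hm⟩)).card : ℚ)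
          = 3 * ((Finset.univ.filter (fun ω : DistΩ n => D m ω ∧ F m ω)).card : ℚ) := by
        exact_mod_cast congrArg (Nat.cast : ℕ → ℚ) (count_F hm)
      have hA : ((Finset.univ.filter (fun ω : DistΩ n => D m ω ∧ F m ω)).card : ℚ) ≠ 0 := by
        intro h0
        apply hne
        rw [h0]
        simp
      rw [div_eq_div_iff hA (by norm_num : (4 : ℚ) ≠ 0)]
      linarith
    · intro hne
      unfold cpr
      simp only [pr_def] at hne ⊢
      have key : (Finset.univ.filter (fun ω : DistΩ n =>
          D (m + 1) ω ∧ (D m ω ∧ ¬ F m ω))).card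
          = (Finset.univ.filter (fun ω : DistΩ n =>
          D m ω ∧ ¬ F m ω ∧ ans ω ⟨m, hm⟩ = corr ω ⟨m, hm⟩)).card := by
        apply card_filter_iff
        intro ω
        rw [D_succ hm]
        tauto
      rw [key, div_div_div_cancel_right₀ (ne_of_gt hNpos)]
      have c2' : 4 * ((Finset.univ.filter (fun ω : DistΩ n =>
          D m ω ∧ ¬ F m ω ∧ ans ω ⟨m, hm⟩ = corr ω ⟨m, hm⟩)).card : ℚ)
          = ((Finset.univ.filter (fun ω : DistΩ n => D m ω ∧ ¬ F m ω)).card : ℚ) := by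
        exact_mod_cast congrArg (Nat.cast : ℕ → ℚ) (count_nF hm)
      have hB : ((Finset.univ.filter (fun ω : DistΩ n => D m ω ∧ ¬ F m ω)).card : ℚ) ≠ 0 := by
        intro h0
        apply hne
        rw [h0]
        simp
      rw [div_eq_div_iff hB (by norm_num : (4 : ℚ) ≠ 0)]
      linarith
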